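/- arXiv:math/0602676 — 5 statements merged into one kernel-verified Lean document; each statement's English description precedes it below -/
import Mathlib

section
/- The first prolongation of a tableau satisfies dim A^{(1)} ≤ s_1(A) + 2 s_2(A) + ⋯ + n s_n(A), where s_1,…,s_n are the characters of A computed with respect to a generic flag of a. -/
section TableauBasics

variable {a b : Type*} [AddCommGroup a] [Module ℝ a] [AddCommGroup b] [Module ℝ b]

/-- The first prolongation `A^{(1)} = {Q ∈ Hom(a, A) : Q(X)(Y) = Q(Y)(X)}` of a
tableau `A ⊆ Hom(a,b)`, as a subspace of `Hom(a, Hom(a,b)) ≅ b ⊗ a* ⊗ a*`. -/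
def prol1 (A : Submodule ℝ (a →ₗ[ℝ] b)) : Submodule ℝ (a →ₗ[ℝ] (a →ₗ[ℝ] b)) where
  carrier := {Q | (∀ X : a, Q X ∈ A) ∧ ∀ X Y : a, Q X Y = Q Y X}
  add_mem' := by
    rintro Q R ⟨hQ1, hQ2⟩ ⟨hR1, hR2⟩
    refine ⟨fun X => ?_, fun X Y => ?_⟩
    · simpa using A.add_mem (hQ1 X) (hR1 X)
    · simp only [LinearMap.add_apply]
      rw [hQ2 X Y, hR2 X Y]
  zero_mem' := ⟨fun X => by simpa using A.zero_mem, fun X Y => by simp⟩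
  smul_mem' := by
    rintro c Q ⟨hQ1, hQ2⟩
    refine ⟨fun X => ?_, fun X Y => ?_⟩
    · simpa using A.smul_mem c (hQ1 X)
    · simp only [LinearMap.smul_apply]
      rw [hQ2 X Y]

/-- `Ker(A, W) = {Q ∈ A : Q|_W = 0}`. -/
def tKer (A : Submodule ℝ (a →ₗ[ℝ] b)) (W : Submodule ℝ a) : Submodule ℝ (a →ₗ[ℝ] b) where
  carrier := {Q | Q ∈ A ∧ ∀ x ∈ W, Q x = 0}
  add_mem' := by
    rintro Q R ⟨hQ1, hQ2⟩ ⟨hR1, hR2⟩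
    exact ⟨A.add_mem hQ1 hR1, fun x hx => by simp [hQ2 x hx, hR2 x hx]⟩
  zero_mem' := ⟨A.zero_mem, fun x _ => by simp⟩
  smul_mem' := by
    rintro c Q ⟨hQ1, hQ2⟩
    exact ⟨A.smul_mem c hQ1, fun x hx => by simp [hQ2 x hx]⟩

/-- A generic flag `(0) ⊂ a_1 ⊂ ⋯ ⊂ a_n = a` for the tableau `A`: each `a_j` is a
`j`-dimensional subspace minimizing the dimension of `Ker(A, ·)` among all
`j`-dimensional subspaces. -/
structure GenericFlag (A : Submodule ℝ (a →ₗ[ℝ] b)) (n : ℕ) where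
  fl : Fin (n + 1) → Submodule ℝ a
  mono : Monotone fl
  rk : ∀ j : Fin (n + 1), Module.finrank ℝ (fl j) = (j : ℕ)
  last_eq : fl (Fin.last n) = ⊤
  generic : ∀ (j : Fin (n + 1)) (W : Submodule ℝ a), Module.finrank ℝ W = (j : ℕ) →
      Module.finrank ℝ (tKer A (fl j)) ≤ Module.finrank ℝ (tKer A W)

/-- The characters `s_j(A)` of the tableau, defined by
`s_1 + ⋯ + s_j = codim Ker(A, a_j)`, i.e. `s_j = dim Ker(A,a_{j-1}) − dim Ker(A,a_j)`. -/
noncomputable def charF (A : Submodule ℝ (a →ₗ[ℝ] b)) {n : ℕ} (F : GenericFlag A n)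
    (j : Fin n) : ℕ :=
  Module.finrank ℝ (tKer A (F.fl j.castSucc)) - Module.finrank ℝ (tKer A (F.fl j.succ))

/-- A tableau is involutive when equality holds in Cartan's inequality
`dim A^{(1)} ≤ s_1 + 2 s_2 + ⋯ + n s_n`. -/
def Involutive (A : Submodule ℝ (a →ₗ[ℝ] b)) (n : ℕ) : Prop :=
  ∀ F : GenericFlag A n,
    Module.finrank ℝ (prol1 A) = ∑ j : Fin n, ((j : ℕ) + 1) * charF A F j

end TableauBasics


section CartanAux

variable {a b : Type*} [AddCommGroup a] [Module ℝ a] [AddCommGroup b] [Module ℝ b]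

lemma mem_tKer' {A : Submodule ℝ (a →ₗ[ℝ] b)} {W : Submodule ℝ a} {Q : a →ₗ[ℝ] b} :
    Q ∈ tKer A W ↔ Q ∈ A ∧ ∀ x ∈ W, Q x = 0 := Iff.rfl

lemma mem_prol1' {A : Submodule ℝ (a →ₗ[ℝ] b)} {Q : a →ₗ[ℝ] (a →ₗ[ℝ] b)} :
    Q ∈ prol1 A ↔ (∀ X : a, Q X ∈ A) ∧ ∀ X Y : a, Q X Y = Q Y X := Iff.rfl

lemma tKer_top' (A : Submodule ℝ (a →ₗ[ℝ] b)) : tKer A ⊤ = ⊥ := by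
  ext Q
  simp only [mem_tKer', Submodule.mem_bot]
  constructor
  · rintro ⟨-, h⟩
    exact LinearMap.ext fun x => h x trivial
  · rintro rfl
    exact ⟨A.zero_mem, fun x _ => rfl⟩

lemma tKer_bot' (A : Submodule ℝ (a →ₗ[ℝ] b)) : tKer A ⊥ = A := by
  ext Q
  simp only [mem_tKer']
  refine ⟨fun h => h.1, fun h => ⟨h, fun x hx => ?_⟩⟩
  rw [Submodule.mem_bot] at hx
  subst hx
  simp

lemma tKer_anti (A : Submodule ℝ (a →ₗ[ℝ] b)) {W W' : Submodule ℝ a} (h : W ≤ W') :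
    tKer A W' ≤ tKer A W := fun Q hQ => ⟨hQ.1, fun x hx => hQ.2 x (h hx)⟩

set_option synthInstance.maxHeartbeats 1000000 in
set_option maxHeartbeats 1000000 in
lemma step_ineq [FiniteDimensional ℝ a] [FiniteDimensional ℝ b]
    (A : Submodule ℝ (a →ₗ[ℝ] b)) {W W' : Submodule ℝ a} {x : a}
    (hspan : W' ≤ W ⊔ Submodule.span ℝ {x}) :
    Module.finrank ℝ (tKer (prol1 A) W) ≤
      Module.finrank ℝ (tKer (prol1 A) W') + Module.finrank ℝ (tKer A W) := by
  set V := tKer (prol1 A) W with hV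
  let ψ : V →ₗ[ℝ] (a →ₗ[ℝ] b) := (LinearMap.applyₗ x).comp V.subtype
  have hψ : ∀ Q : V, ψ Q = (Q : a →ₗ[ℝ] (a →ₗ[ℝ] b)) x := fun Q => rfl
  have hrange : LinearMap.range ψ ≤ tKer A W := by
    rintro - ⟨Q, rfl⟩
    obtain ⟨hQ1, hQ2⟩ := mem_tKer'.mp Q.2
    obtain ⟨hA, hsym⟩ := mem_prol1'.mp hQ1
    refine ⟨hA x, fun y hy => ?_⟩
    rw [hψ, hsym x y, hQ2 y hy]
    rfl
  have hker : Submodule.map V.subtype (LinearMap.ker ψ) ≤ tKer (prol1 A) W' := by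
    rintro - ⟨Q, hQk, rfl⟩
    obtain ⟨hQ1, hQ2⟩ := mem_tKer'.mp Q.2
    refine ⟨hQ1, fun y hy => ?_⟩
    obtain ⟨w, hw, z, hz, rfl⟩ := Submodule.mem_sup.mp (hspan hy)
    obtain ⟨c, rfl⟩ := Submodule.mem_span_singleton.mp hz
    have hx0 := LinearMap.mem_ker.mp hQk
    rw [hψ] at hx0
    simp [map_add, map_smul, hQ2 w hw, hx0]
  haveI : FiniteDimensional ℝ (a →ₗ[ℝ] a →ₗ[ℝ] b) := by infer_instance
  haveI : FiniteDimensional ℝ V := by infer_instance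
  have h1 := LinearMap.finrank_range_add_finrank_ker (K := ℝ) (V := ↥V) (V₂ := a →ₗ[ℝ] b) ψ
  have h2 := Submodule.finrank_mono hrange
  have h3 := Submodule.finrank_mono hker
  rw [Submodule.finrank_map_subtype_eq V _] at h3
  omega

lemma flag_span_step [FiniteDimensional ℝ a] (A : Submodule ℝ (a →ₗ[ℝ] b)) {n : ℕ}
    (F : GenericFlag A n) {j j' : Fin (n + 1)} (h : (j : ℕ) + 1 = (j' : ℕ)) :
    ∃ x : a, F.fl j' ≤ F.fl j ⊔ Submodule.span ℝ {x} := by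
  have hle : F.fl j ≤ F.fl j' := F.mono (by rw [Fin.le_def]; omega)
  have hlt : F.fl j < F.fl j' := lt_of_le_of_ne hle (by
    intro he
    have h1 := F.rk j
    have h2 := F.rk j'
    rw [he, h2] at h1
    omega)
  obtain ⟨x, hx, hxn⟩ := SetLike.exists_of_lt hlt
  refine ⟨x, ?_⟩
  have hsup_le : F.fl j ⊔ Submodule.span ℝ {x} ≤ F.fl j' :=
    sup_le hle ((Submodule.span_singleton_le_iff_mem x _).mpr hx)
  have hlt2 : F.fl j < F.fl j ⊔ Submodule.span ℝ {x} := by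
    refine lt_of_le_of_ne le_sup_left fun he => hxn ?_
    rw [he]
    exact (le_sup_right : Submodule.span ℝ {x} ≤ _) (Submodule.mem_span_singleton_self x)
  have hfr := Submodule.finrank_lt_finrank_of_lt hlt2
  have h1 := F.rk j
  have h2 := F.rk j'
  have heq : F.fl j ⊔ Submodule.span ℝ {x} = F.fl j' :=
    Submodule.eq_of_le_of_finrank_le hsup_le (by omega)
  exact heq.ge

noncomputable def cAux {a b : Type*} [AddCommGroup a] [Module ℝ a] [AddCommGroup b]
    [Module ℝ b] (A : Submodule ℝ (a →ₗ[ℝ] b)) {n : ℕ} (F : GenericFlag A n) (k : ℕ) : ℕ :=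
  Module.finrank ℝ (tKer A (F.fl ⟨min k n, Nat.lt_succ_of_le (min_le_right _ _)⟩))

noncomputable def dAux {a b : Type*} [AddCommGroup a] [Module ℝ a] [AddCommGroup b]
    [Module ℝ b] (A : Submodule ℝ (a →ₗ[ℝ] b)) {n : ℕ} (F : GenericFlag A n) (k : ℕ) : ℕ :=
  Module.finrank ℝ (tKer (prol1 A) (F.fl ⟨min k n, Nat.lt_succ_of_le (min_le_right _ _)⟩))

lemma fl_min_self (A : Submodule ℝ (a →ₗ[ℝ] b)) {n : ℕ} (F : GenericFlag A n) :
    F.fl ⟨min n n, Nat.lt_succ_of_le (min_le_right _ _)⟩ = ⊤ := by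
  have : (⟨min n n, Nat.lt_succ_of_le (min_le_right n n)⟩ : Fin (n + 1)) = Fin.last n :=
    Fin.ext (min_self n)
  rw [this, F.last_eq]

lemma cAux_n (A : Submodule ℝ (a →ₗ[ℝ] b)) {n : ℕ} (F : GenericFlag A n) :
    cAux A F n = 0 := by
  unfold cAux
  rw [fl_min_self, tKer_top', finrank_bot]

lemma dAux_n (A : Submodule ℝ (a →ₗ[ℝ] b)) {n : ℕ} (F : GenericFlag A n) :
    dAux A F n = 0 := by
  unfold dAux
  rw [fl_min_self, tKer_top', finrank_bot]

lemma dAux_0 [FiniteDimensional ℝ a] (A : Submodule ℝ (a →ₗ[ℝ] b)) {n : ℕ}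
    (F : GenericFlag A n) : dAux A F 0 = Module.finrank ℝ (prol1 A) := by
  unfold dAux
  have h0 : F.fl ⟨min 0 n, Nat.lt_succ_of_le (min_le_right _ _)⟩ = ⊥ := by
    apply Submodule.finrank_eq_zero.mp
    have := F.rk ⟨min 0 n, Nat.lt_succ_of_le (min_le_right _ _)⟩
    simpa using this
  rw [h0, tKer_bot']

end CartanAux

/-- **Cartan's inequality.** The first prolongation of a tableau satisfies
`dim A^{(1)} ≤ s_1(A) + 2 s_2(A) + ⋯ + n s_n(A)`, the characters being computed with
respect to a generic flag of `a`. -/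
theorem prol1_finrank_le {a b : Type*} [AddCommGroup a] [Module ℝ a]
    [AddCommGroup b] [Module ℝ b] [FiniteDimensional ℝ a] [FiniteDimensional ℝ b]
    (A : Submodule ℝ (a →ₗ[ℝ] b)) (n : ℕ) (hn : Module.finrank ℝ a = n)
    (F : GenericFlag A n) :
    Module.finrank ℝ (prol1 A) ≤ ∑ j : Fin n, ((j : ℕ) + 1) * charF A F j := by
  classical
  have hmono : ∀ k, cAux A F (k + 1) ≤ cAux A F k := by
    intro k
    unfold cAux
    exact Submodule.finrank_mono (tKer_anti A (F.mono (Fin.mk_le_mk.mpr (by omega))))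
  have hstep : ∀ k, k < n → dAux A F k ≤ dAux A F (k + 1) + cAux A F k := by
    intro k hk
    obtain ⟨x, hx⟩ := flag_span_step A F
      (j := ⟨min k n, Nat.lt_succ_of_le (min_le_right _ _)⟩)
      (j' := ⟨min (k + 1) n, Nat.lt_succ_of_le (min_le_right _ _)⟩) (by simp; omega)
    unfold dAux cAux
    exact step_ineq A hx
  have key : ∀ i, i ≤ n → dAux A F (n - i) ≤ ∑ k ∈ Finset.Ico (n - i) n, cAux A F k := by
    intro i
    induction i with
    | zero =>
      intro _
      simp [dAux_n A F]
    | succ i ih =>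
      intro hi
      have h1 := hstep (n - (i + 1)) (by omega)
      have h2 := ih (by omega)
      have he : n - (i + 1) + 1 = n - i := by omega
      rw [he] at h1
      rw [Finset.sum_eq_sum_Ico_succ_bot (by omega : n - (i + 1) < n), he]
      exact h1.trans (by rw [Nat.add_comm (dAux A F (n - i))]
                         exact Nat.add_le_add_left h2 _)
  have hmain : Module.finrank ℝ (prol1 A) ≤ ∑ k ∈ Finset.range n, cAux A F k := by
    have h := key n le_rfl
    rw [Nat.sub_self] at h
    rw [← dAux_0 A F, Finset.range_eq_Ico]
    exact h
  have hchar : ∀ j : Fin n, charF A F j = cAux A F j.val - cAux A F (j.val + 1) := by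
    intro j
    have hj := j.isLt
    have e1 : j.castSucc = (⟨min (j : ℕ) n, Nat.lt_succ_of_le (min_le_right _ _)⟩ : Fin (n + 1)) :=
      Fin.ext (by simp only [Fin.coe_castSucc]; omega)
    have e2 : j.succ = (⟨min ((j : ℕ) + 1) n, Nat.lt_succ_of_le (min_le_right _ _)⟩ : Fin (n + 1)) :=
      Fin.ext (by simp only [Fin.val_succ]; omega)
    unfold charF cAux
    rw [e1, e2]
  have hZ : ∀ m : ℕ, ∑ k ∈ Finset.range m, ((k : ℤ) + 1) * ((cAux A F k : ℤ) - (cAux A F (k + 1) : ℤ))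
      = (∑ k ∈ Finset.range m, (cAux A F k : ℤ)) - (m : ℤ) * (cAux A F m : ℤ) := by
    intro m
    induction m with
    | zero => simp
    | succ m ih =>
      rw [Finset.sum_range_succ, ih, Finset.sum_range_succ]
      push_cast
      ring
  have hNat : ∑ k ∈ Finset.range n, cAux A F k
      = ∑ k ∈ Finset.range n, (k + 1) * (cAux A F k - cAux A F (k + 1)) := by
    have h1 := hZ n
    rw [cAux_n A F] at h1
    have h2 : ((∑ k ∈ Finset.range n, (k + 1) * (cAux A F k - cAux A F (k + 1)) : ℕ) : ℤ)
        = ∑ k ∈ Finset.range n, ((k : ℤ) + 1) * ((cAux A F k : ℤ) - (cAux A F (k + 1) : ℤ)) := by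
      rw [Nat.cast_sum]
      refine Finset.sum_congr rfl fun k _ => ?_
      rw [Nat.cast_mul, Nat.cast_sub (hmono k)]
      push_cast
      ring
    have h3 : ((∑ k ∈ Finset.range n, cAux A F k : ℕ) : ℤ)
        = ∑ k ∈ Finset.range n, (cAux A F k : ℤ) := Nat.cast_sum _ _
    have : ((∑ k ∈ Finset.range n, cAux A F k : ℕ) : ℤ)
        = ((∑ k ∈ Finset.range n, (k + 1) * (cAux A F k - cAux A F (k + 1)) : ℕ) : ℤ) := by
      rw [h2, h1, h3]
      push_cast
      ring
    exact_mod_cast this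
  have hfin : ∑ j : Fin n, ((j : ℕ) + 1) * charF A F j
      = ∑ k ∈ Finset.range n, (k + 1) * (cAux A F k - cAux A F (k + 1)) := by
    rw [← Fin.sum_univ_eq_sum_range (fun k => (k + 1) * (cAux A F k - cAux A F (k + 1))) n]
    exact Finset.sum_congr rfl fun j _ => by rw [hchar j]
  calc Module.finrank ℝ (prol1 A) ≤ ∑ k ∈ Finset.range n, cAux A F k := hmain
    _ = ∑ k ∈ Finset.range n, (k + 1) * (cAux A F k - cAux A F (k + 1)) := hNat
    _ = ∑ j : Fin n, ((j : ℕ) + 1) * charF A F j := hfin.symm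
end

section
/- Let g = g_0 ⊕ m be a Cartan decomposition, a ⊂ m maximal abelian, b = a^⊥ ∩ m, p = (g_a)^⊥ ∩ g_0, and let A ⊂ Hom(a,p) be the tableau image of b under B ↦ ad_B|_a. Then the map p → Hom(a, A), X ↦ (A' ↦ image of ad_{[X,A']}|_a), lands in the first prolongation A^{(1)} and is a linear isomorphism p ≅ A^{(1)}; in particular dim A^{(1)} = dim p. Combined with the characters s_1(A) = dim b and s_2 = ⋯ = s_n = 0, the tableau A is involutive. -/
set_option maxSynthPendingDepth 3

/-- The tableau `A ⊂ Hom(a,p)`: the image of `b` under `B ↦ ad_B|_a`. -/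
def cartanTableau (g : Type*) [LieRing g] [LieAlgebra ℝ g]
    (aS bS pS : Submodule ℝ g)
    (hwd : ∀ X ∈ bS, ∀ A' ∈ aS, ⁅X, A'⁆ ∈ pS) :
    Submodule ℝ (↥aS →ₗ[ℝ] ↥pS) where
  carrier := {F | ∃ X ∈ bS, ∀ A' : ↥aS, ((F A' : g)) = ⁅X, (A' : g)⁆}
  add_mem' := by
    rintro F G ⟨X, hX, hF⟩ ⟨Y, hY, hG⟩
    exact ⟨X + Y, bS.add_mem hX hY, fun A' => by
      simp [hF A', hG A', add_lie]⟩
  zero_mem' := ⟨0, bS.zero_mem, fun A' => by simp⟩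
  smul_mem' := by
    rintro c F ⟨X, hX, hF⟩
    exact ⟨c • X, bS.smul_mem c hX, fun A' => by simp [hF A', smul_lie]⟩

open Module

section AuxGeneric

private lemma exists_t_det'' {W : Type*} [AddCommGroup W] [Module ℝ W] [FiniteDimensional ℝ W]
    (f g : W →ₗ[ℝ] W) (hf : Function.Bijective f) :
    ∃ t : ℝ, t ≠ 0 ∧ Function.Injective (f + t • g) := by
  classical
  set b := Module.finBasis ℝ W with hb
  set M := LinearMap.toMatrix b b f with hM
  set N := LinearMap.toMatrix b b g with hN
  set q : Polynomial ℝ :=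
    (M.map Polynomial.C + (Polynomial.X : Polynomial ℝ) • N.map Polynomial.C).det with hq
  have heval : ∀ t : ℝ, q.eval t = LinearMap.det (f + t • g) := by
    intro t
    have h1 : ((M.map Polynomial.C + (Polynomial.X : Polynomial ℝ) • N.map Polynomial.C).map
        (Polynomial.evalRingHom t)) = LinearMap.toMatrix b b (f + t • g) := by
      ext i j
      simp [Matrix.map_apply, Matrix.add_apply, Matrix.smul_apply, smul_eq_mul, hM, hN,
        LinearMap.toMatrix_apply]
      ring
    calc q.eval t = (Polynomial.evalRingHom t) q := rfl
    _ = (LinearMap.toMatrix b b (f + t • g)).det := by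
          rw [hq, RingHom.map_det]
          congr 1
    _ = LinearMap.det (f + t • g) := LinearMap.det_toMatrix b _
  have hdf : LinearMap.det f ≠ 0 :=
    (LinearMap.isUnit_det f ((Module.End.isUnit_iff f).2 hf)).ne_zero
  have hq0 : q.eval 0 = LinearMap.det f := by simpa using heval 0
  have hqne : q ≠ 0 := fun h => hdf (by simp [h] at hq0; exact hq0.symm)
  have hfin : ({x | q.IsRoot x} ∪ {0} : Set ℝ).Finite :=
    (Polynomial.finite_setOf_isRoot hqne).union (Set.finite_singleton 0)
  obtain ⟨t, ht⟩ := hfin.infinite_compl.nonempty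
  simp only [Set.mem_compl_iff, Set.mem_union, Set.mem_setOf_eq, Set.mem_singleton_iff,
    not_or] at ht
  refine ⟨t, ht.2, ?_⟩
  have hdet : (LinearMap.toMatrix b b (f + t • g)).det ≠ 0 := by
    rw [LinearMap.det_toMatrix, ← heval t]; exact ht.1
  exact (LinearEquiv.ofIsUnitDet (v := b) (v' := b) (f := f + t • g)
    (isUnit_iff_ne_zero.2 hdet)).injective

private lemma exists_generic' {V : Type*} [AddCommGroup V] [Module ℝ V] [FiniteDimensional ℝ V]
    {ι : Type*} [AddCommGroup ι] [Module ℝ ι]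
    (Φ : LinearMap.BilinForm ℝ V) (hsymm : ∀ x y, Φ x y = Φ y x)
    (hpos : ∀ v : V, v ≠ 0 → 0 < Φ v v)
    (T : ι →ₗ[ℝ] Module.End ℝ V)
    (hTsym : ∀ A x y, Φ (T A x) y = Φ x (T A y))
    (hcomm : ∀ A B x, T A (T B x) = T B (T A x))
    (hker : ∀ v : V, (∀ A, T A v = 0) → v = 0) :
    ∃ A, Function.Injective (T A) := by
  classical
  set R : ι → ℕ := fun A => finrank ℝ (LinearMap.range (T A)) with hR
  have hbdd : ∀ A, R A ≤ finrank ℝ V := fun A => (LinearMap.range (T A)).finrank_le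
  obtain ⟨A0, hA0⟩ : ∃ A0, ∀ A, R A ≤ R A0 := by
    have hne : (Set.range R).Nonempty := ⟨R 0, ⟨0, rfl⟩⟩
    have hbd : BddAbove (Set.range R) := ⟨finrank ℝ V, by rintro x ⟨A, rfl⟩; exact hbdd A⟩
    obtain ⟨A0, hA0⟩ := Nat.sSup_mem hne hbd
    exact ⟨A0, fun A => hA0 ▸ le_csSup hbd ⟨A, rfl⟩⟩
  by_contra hcon
  push_neg at hcon
  have hKne : LinearMap.ker (T A0) ≠ ⊥ :=
    fun h => hcon A0 (LinearMap.ker_eq_bot.1 h)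
  obtain ⟨v, hvK, hv0⟩ := (Submodule.ne_bot_iff _).1 hKne
  obtain ⟨A1, hA1⟩ : ∃ A1, T A1 v ≠ 0 := by
    by_contra h; push_neg at h; exact hv0 (hker v h)
  set K := LinearMap.ker (T A0) with hK
  set K' := Φ.orthogonal K with hK'
  have hKinv : ∀ A, ∀ x ∈ K, T A x ∈ K := by
    intro A x hx
    simp only [hK, LinearMap.mem_ker] at hx ⊢
    rw [hcomm A0 A x, hx, map_zero]
  have hrefl : Φ.IsRefl := fun x y h => by rw [hsymm]; exact h
  have hres : (Φ.restrict K).Nondegenerate := by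
    refine (LinearMap.IsRefl.nondegenerate_iff_separatingLeft (B := Φ.restrict K)
      (fun x y h => hrefl _ _ h)).2 ?_
    intro x hx
    by_contra h0
    have hx0 : (x : V) ≠ 0 := fun hh => h0 (Subtype.ext hh)
    have := hpos x.1 hx0
    have h2 := hx x
    rw [LinearMap.BilinForm.restrict_apply, LinearMap.domRestrict_apply] at h2
    rw [h2] at this
    exact lt_irrefl 0 this
  have hcompl : IsCompl K K' :=
    LinearMap.BilinForm.isCompl_orthogonal_of_restrict_nondegenerate hrefl hres
  have hK'inv : ∀ A, ∀ x ∈ K', T A x ∈ K' := by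
    intro A x hx n hn
    show Φ n (T A x) = 0
    rw [← hTsym A n x]
    exact hx _ (hKinv A n hn)
  set f : ↥K' →ₗ[ℝ] ↥K' := (T A0).restrict (hK'inv A0) with hf
  have hfinj : Function.Injective f := by
    rw [← LinearMap.ker_eq_bot, Submodule.eq_bot_iff]
    rintro ⟨x, hxK'⟩ hx
    have hx1 : T A0 x = 0 := by
      have := congrArg (Subtype.val) hx
      simpa [hf, LinearMap.restrict_apply] using this
    have hxK : x ∈ K := hx1
    have : x = 0 := Submodule.disjoint_def.1 hcompl.disjoint x hxK hxK'
    exact Subtype.ext this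
  have hfbij : Function.Bijective f :=
    ⟨hfinj, (LinearMap.injective_iff_surjective).1 hfinj⟩
  set g' : ↥K' →ₗ[ℝ] ↥K' := (T A1).restrict (hK'inv A1) with hg'
  obtain ⟨t, ht0, htinj⟩ := exists_t_det'' f g' hfbij
  set S := T (A0 + t • A1) with hS
  have hSeq : ∀ x : V, S x = T A0 x + t • T A1 x := by
    intro x; rw [hS, map_add, map_smul]; rfl
  have hvK0 : T A0 v = 0 := hvK
  have hw : S v = t • (T A1 v) := by rw [hSeq, hvK0, zero_add]
  have hwK : S v ∈ K := by rw [hw]; exact K.smul_mem _ (hKinv A1 v hvK)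
  have hwne : S v ≠ 0 := by rw [hw]; exact smul_ne_zero ht0 hA1
  have hFbij : Function.Bijective (f + t • g') :=
    ⟨htinj, (LinearMap.injective_iff_surjective).1 htinj⟩
  have happ : ∀ x : ↥K', ((f + t • g') x : V) = S x.1 := by
    intro x
    simp [hf, hg', LinearMap.restrict_apply, hSeq]
  have hK'range : K' ≤ LinearMap.range S := by
    intro y hy
    obtain ⟨x, hx⟩ := hFbij.2 ⟨y, hy⟩
    exact ⟨x.1, by rw [← happ x, hx]⟩
  have hdisj : K' ⊓ (ℝ ∙ S v) = ⊥ := by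
    rw [eq_bot_iff]
    rintro x ⟨hx1, hx2⟩
    have hxK : x ∈ K := by
      obtain ⟨c, rfl⟩ := Submodule.mem_span_singleton.1 hx2
      exact K.smul_mem c hwK
    exact Submodule.disjoint_def.1 hcompl.disjoint x hxK hx1
  have hle : K' ⊔ (ℝ ∙ S v) ≤ LinearMap.range S :=
    sup_le hK'range ((Submodule.span_singleton_le_iff_mem _ _).2 ⟨v, rfl⟩)
  have hsum := Submodule.finrank_sup_add_finrank_inf_eq K' (ℝ ∙ S v)
  rw [hdisj] at hsum
  have h4 : finrank ℝ ↥(⊥ : Submodule ℝ V) = 0 := finrank_bot ℝ V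
  rw [h4] at hsum
  have hspan1 : finrank ℝ ↥(ℝ ∙ S v) = 1 := finrank_span_singleton hwne
  have hrk : R A0 + 1 ≤ finrank ℝ (LinearMap.range S) := by
    have h1 : finrank ℝ ↥K' = R A0 := by
      have h2 := LinearMap.finrank_range_add_finrank_ker (T A0)
      rw [← hK] at h2
      have h3 := Submodule.finrank_add_eq_of_isCompl hcompl
      simp only [hR]
      omega
    have h5 : finrank ℝ ↥(K' ⊔ (ℝ ∙ S v)) ≤ finrank ℝ (LinearMap.range S) :=
      Submodule.finrank_mono hle
    omega
  have := hA0 (A0 + t • A1)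
  simp only [hR] at this hrk
  rw [← hS] at this
  omega

/-- Restriction of the adjoint action to submodules. -/
def adR {g : Type*} [LieRing g] [LieAlgebra ℝ g] (P V W : Submodule ℝ g)
    (h : ∀ X ∈ P, ∀ x ∈ V, ⁅X, x⁆ ∈ W) :
    ↥P →ₗ[ℝ] (↥V →ₗ[ℝ] ↥W) where
  toFun X :=
    { toFun := fun x => ⟨⁅(X : g), (x : g)⁆, h X X.2 x x.2⟩
      map_add' := fun x y => Subtype.ext (by simp)
      map_smul' := fun c x => Subtype.ext (by simp) }
  map_add' X Y := LinearMap.ext fun x => Subtype.ext (by simp [add_lie])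
  map_smul' c X := LinearMap.ext fun x => Subtype.ext (by simp [smul_lie])

@[simp] lemma adR_apply {g : Type*} [LieRing g] [LieAlgebra ℝ g] (P V W : Submodule ℝ g)
    (h : ∀ X ∈ P, ∀ x ∈ V, ⁅X, x⁆ ∈ W) (X : ↥P) (x : ↥V) :
    ((adR P V W h X x : ↥W) : g) = ⁅(X : g), (x : g)⁆ := rfl

end AuxGeneric

set_option maxHeartbeats 2000000 in
set_option synthInstance.maxHeartbeats 1000000 in
/-- For a Cartan decomposition `g = g₀ ⊕ m` with maximal abelian
`a ⊂ m`, `b = a^⊥ ∩ m`, `p = (g_a)^⊥ ∩ g₀`, and the tableau `A ⊂ Hom(a,p)` given by the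
image of `b` under `B ↦ ad_B|_a`: the map `p → Hom(a, A)`, `X ↦ (A' ↦ ad_{[X,A']}|_a)`,
lands in the first prolongation `A^{(1)}` and is a linear isomorphism `p ≅ A^{(1)}`; in
particular `dim A^{(1)} = dim p`.  Combined with the characters `s₁(A) = dim b`,
`s₂ = ⋯ = s_n = 0`, the tableau `A` is involutive. -/
theorem cartan_tableau_involutive
    (g : Type*) [LieRing g] [LieAlgebra ℝ g] [FiniteDimensional ℝ g]
    [LieAlgebra.IsSemisimple ℝ g]
    (g0 m aS bS gaS pS : Submodule ℝ g)
    (hcompl : IsCompl g0 m)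
    (h00 : ∀ x ∈ g0, ∀ y ∈ g0, ⁅x, y⁆ ∈ g0)
    (h0m : ∀ x ∈ g0, ∀ y ∈ m, ⁅x, y⁆ ∈ m)
    (hmm : ∀ x ∈ m, ∀ y ∈ m, ⁅x, y⁆ ∈ g0)
    (hneg : ∀ x ∈ g0, x ≠ 0 → killingForm ℝ g x x < 0)
    (hpos : ∀ x ∈ m, x ≠ 0 → 0 < killingForm ℝ g x x)
    (horth : ∀ x ∈ g0, ∀ y ∈ m, killingForm ℝ g x y = 0)
    (haM : aS ≤ m)
    (hab : ∀ x ∈ aS, ∀ y ∈ aS, ⁅x, y⁆ = 0)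
    (hamax : ∀ a' : Submodule ℝ g, a' ≤ m → aS ≤ a' →
        (∀ x ∈ a', ∀ y ∈ a', ⁅x, y⁆ = 0) → a' = aS)
    (hbS : ∀ x : g, x ∈ bS ↔ x ∈ m ∧ ∀ y ∈ aS, killingForm ℝ g x y = 0)
    (hgaS : ∀ x : g, x ∈ gaS ↔ x ∈ g0 ∧ ∀ A' ∈ aS, ⁅x, A'⁆ = 0)
    (hpS : ∀ x : g, x ∈ pS ↔ x ∈ g0 ∧ ∀ y ∈ gaS, killingForm ℝ g x y = 0)
    (hwd : ∀ X ∈ bS, ∀ A' ∈ aS, ⁅X, A'⁆ ∈ pS)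
    (n : ℕ) (hn : Module.finrank ℝ ↥aS = n) :
    (∀ X ∈ pS, ∀ A' ∈ aS, ⁅X, A'⁆ ∈ bS) ∧
    (∀ X ∈ pS, ∀ A' ∈ aS, ∀ A'' ∈ aS, ⁅⁅X, A'⁆, A''⁆ ∈ pS) ∧
    (∀ X ∈ pS, ∀ Q : ↥aS →ₗ[ℝ] (↥aS →ₗ[ℝ] ↥pS),
        (∀ A' A'' : ↥aS, ((Q A' A'' : ↥pS) : g) = ⁅⁅X, (A' : g)⁆, (A'' : g)⁆) →
        Q ∈ prol1 (cartanTableau g aS bS pS hwd)) ∧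
    (∀ X ∈ pS, (∀ A' A'' : ↥aS, ⁅⁅X, (A' : g)⁆, (A'' : g)⁆ = 0) → X = 0) ∧
    (∀ Q ∈ prol1 (cartanTableau g aS bS pS hwd), ∃ X ∈ pS,
        ∀ A' A'' : ↥aS, ((Q A' A'' : ↥pS) : g) = ⁅⁅X, (A' : g)⁆, (A'' : g)⁆) ∧
    (Module.finrank ℝ (prol1 (cartanTableau g aS bS pS hwd)) = Module.finrank ℝ ↥pS) ∧
    (∀ F : GenericFlag (cartanTableau g aS bS pS hwd) n, ∀ j : Fin n,
        charF (cartanTableau g aS bS pS hwd) F j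
          = if (j : ℕ) = 0 then Module.finrank ℝ ↥bS else 0) ∧
    Involutive (cartanTableau g aS bS pS hwd) n := by
  classical
  set CT := cartanTableau g aS bS pS hwd with hCT
  have Ksymm : ∀ x y : g, killingForm ℝ g x y = killingForm ℝ g y x :=
    fun x y => LieModule.traceForm_comm ℝ g g x y
  have Kinv : ∀ x y z : g, killingForm ℝ g ⁅x, y⁆ z = killingForm ℝ g x ⁅y, z⁆ :=
    LieModule.traceForm_apply_lie_apply ℝ g g
  have Kskew : ∀ x y z : g, killingForm ℝ g ⁅x, y⁆ z = - killingForm ℝ g y ⁅x, z⁆ :=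
    LieModule.traceForm_apply_lie_apply' ℝ g g
  have part1 : ∀ X ∈ pS, ∀ A' ∈ aS, ⁅X, A'⁆ ∈ bS := by
    intro X hX A' hA'
    have hX0 : X ∈ g0 := ((hpS X).1 hX).1
    rw [hbS]
    refine ⟨h0m X hX0 A' (haM hA'), fun y hy => ?_⟩
    rw [Kinv, hab A' hA' y hy]
    simp
  have part2 : ∀ X ∈ pS, ∀ A' ∈ aS, ∀ A'' ∈ aS, ⁅⁅X, A'⁆, A''⁆ ∈ pS := by
    intro X hX A' hA' A'' hA''
    have h1 : ⁅X, A'⁆ ∈ bS := part1 X hX A' hA'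
    have h1m : ⁅X, A'⁆ ∈ m := ((hbS _).1 h1).1
    rw [hpS]
    refine ⟨hmm _ h1m A'' (haM hA''), fun y hy => ?_⟩
    rw [Kinv]
    have hz : ⁅A'', y⁆ = 0 := by
      have h2 := ((hgaS y).1 hy).2 A'' hA''
      rw [← lie_skew, h2, neg_zero]
    rw [hz]
    simp
  have bzero : ∀ B ∈ bS, (∀ A' ∈ aS, ⁅B, A'⁆ = 0) → B = 0 := by
    intro B hB hBA
    have hBm : B ∈ m := ((hbS B).1 hB).1
    have hspan : (ℝ ∙ B) ≤ m := by rwa [Submodule.span_singleton_le_iff_mem]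
    have habel : ∀ x ∈ aS ⊔ (ℝ ∙ B), ∀ y ∈ aS ⊔ (ℝ ∙ B), ⁅x, y⁆ = 0 := by
      intro x hx y hy
      obtain ⟨x1, hx1, x2, hx2, rfl⟩ := Submodule.mem_sup.1 hx
      obtain ⟨y1, hy1, y2, hy2, rfl⟩ := Submodule.mem_sup.1 hy
      obtain ⟨c, rfl⟩ := Submodule.mem_span_singleton.1 hx2
      obtain ⟨d, rfl⟩ := Submodule.mem_span_singleton.1 hy2
      have h1 : ⁅x1, y1⁆ = 0 := hab x1 hx1 y1 hy1
      have h2 : ⁅B, y1⁆ = 0 := hBA y1 hy1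
      have h3 : ⁅x1, B⁆ = 0 := by rw [← lie_skew, hBA x1 hx1, neg_zero]
      simp [lie_add, add_lie, lie_smul, smul_lie, h1, h2, h3]
    have heq := hamax (aS ⊔ (ℝ ∙ B)) (sup_le haM hspan) le_sup_left habel
    have hBa : B ∈ aS := by
      rw [← heq]
      exact (le_sup_right : (ℝ ∙ B) ≤ aS ⊔ (ℝ ∙ B)) (Submodule.mem_span_singleton_self B)
    have hKB : killingForm ℝ g B B = 0 := ((hbS B).1 hB).2 B hBa
    by_contra hB0
    exact absurd hKB (ne_of_gt (hpos B hBm hB0))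
  have pzero : ∀ P ∈ pS, (∀ A' ∈ aS, ⁅P, A'⁆ = 0) → P = 0 := by
    intro P hP hPA
    have hP0 : P ∈ g0 := ((hpS P).1 hP).1
    have hPga : P ∈ gaS := (hgaS P).2 ⟨hP0, hPA⟩
    have hKP : killingForm ℝ g P P = 0 := ((hpS P).1 hP).2 P hPga
    by_contra hPne
    exact absurd hKP (ne_of_lt (hneg P hP0 hPne))
  have part4' : ∀ X ∈ pS, (∀ A' ∈ aS, ∀ A'' ∈ aS, ⁅⁅X, A'⁆, A''⁆ = 0) → X = 0 := by
    intro X hX hd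
    refine pzero X hX (fun A' hA' => ?_)
    have h1 : ⁅X, A'⁆ ∈ m := ((hbS _).1 (part1 X hX A' hA')).1
    have h2 : killingForm ℝ g ⁅X, A'⁆ ⁅X, A'⁆ = 0 := by
      rw [Kinv]
      have h3 : ⁅A', ⁅X, A'⁆⁆ = 0 := by
        rw [← lie_skew, hd A' hA' A' hA', neg_zero]
      rw [h3]
      simp
    by_contra h0
    exact absurd h2 (ne_of_gt (hpos _ h1 h0))
  have hjac : ∀ X A' A'' : g, ⁅A', A''⁆ = 0 → ⁅⁅X, A'⁆, A''⁆ = ⁅⁅X, A''⁆, A'⁆ := by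
    intro X A' A'' h
    rw [lie_lie, h, lie_zero, zero_sub, lie_skew]
  -- projections onto g0 and m
  set prj0 : g →ₗ[ℝ] g := g0.subtype ∘ₗ (g0.projectionOnto m hcompl) with hprj0
  set prjm : g →ₗ[ℝ] g := m.subtype ∘ₗ (m.projectionOnto g0 hcompl.symm) with hprjm
  have hmem0 : ∀ x, prj0 x ∈ g0 := fun x => (g0.projectionOnto m hcompl x).2
  have hmemm : ∀ x, prjm x ∈ m := fun x => (m.projectionOnto g0 hcompl.symm x).2
  have hsumx : ∀ x : g, prj0 x + prjm x = x := fun x =>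
    Submodule.projection_add_projection_eq_self hcompl x
  have hdec : ∀ (u v : g), u ∈ g0 → v ∈ m → prj0 (u + v) = u ∧ prjm (u + v) = v := by
    intro u v hu hv
    have h0u : prj0 u = u := by
      have h := Submodule.linearProjOfIsCompl_apply_left hcompl ⟨u, hu⟩
      simp only [hprj0, LinearMap.comp_apply]
      rw [show u = ((⟨u, hu⟩ : g0) : g) from rfl, h]
      rfl
    have h0v : prj0 v = 0 := by
      have h := Submodule.projectionOnto_apply_of_mem_right hcompl hv
      simp only [hprj0, LinearMap.comp_apply, h]
      simp
    have hmu : prjm u = 0 := by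
      have h := Submodule.projectionOnto_apply_of_mem_right hcompl.symm hu
      simp only [hprjm, LinearMap.comp_apply, h]
      simp
    have hmv : prjm v = v := by
      have h := Submodule.linearProjOfIsCompl_apply_left hcompl.symm ⟨v, hv⟩
      simp only [hprjm, LinearMap.comp_apply]
      rw [show v = ((⟨v, hv⟩ : m) : g) from rfl, h]
      rfl
    constructor
    · rw [map_add, h0u, h0v, add_zero]
    · rw [map_add, hmu, hmv, zero_add]
  -- the positive definite form
  set ipg : LinearMap.BilinForm ℝ g := LinearMap.mk₂ ℝ
    (fun x y => killingForm ℝ g (prjm x) (prjm y) - killingForm ℝ g (prj0 x) (prj0 y))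
    (by intro x y z; simp only [map_add, LinearMap.add_apply]; ring)
    (by intro c x y; simp only [map_smul, LinearMap.smul_apply, smul_eq_mul]; ring)
    (by intro x y z; simp only [map_add, LinearMap.add_apply]; ring)
    (by intro c x y; simp only [map_smul, LinearMap.smul_apply, smul_eq_mul]; ring)
    with hipg
  have hipg_apply : ∀ x y : g, ipg x y =
      killingForm ℝ g (prjm x) (prjm y) - killingForm ℝ g (prj0 x) (prj0 y) := by
    intro x y
    simp [hipg, LinearMap.mk₂_apply]
  have hipg_symm : ∀ x y, ipg x y = ipg y x := by
    intro x y
    rw [hipg_apply, hipg_apply, Ksymm (prjm x) (prjm y), Ksymm (prj0 x) (prj0 y)]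
  have hipg_pos : ∀ x : g, x ≠ 0 → 0 < ipg x x := by
    intro x hx
    rw [hipg_apply]
    have h3 : prjm x ≠ 0 ∨ prj0 x ≠ 0 := by
      by_contra hc
      push_neg at hc
      apply hx
      rw [← hsumx x, hc.1, hc.2, add_zero]
    rcases h3 with h | h
    · have h1 := hpos _ (hmemm x) h
      have h2 : killingForm ℝ g (prj0 x) (prj0 x) ≤ 0 := by
        rcases eq_or_ne (prj0 x) 0 with h' | h'
        · simp [h']
        · exact le_of_lt (hneg _ (hmem0 x) h')
      linarith
    · have h1 := hneg _ (hmem0 x) h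
      have h2 : 0 ≤ killingForm ℝ g (prjm x) (prjm x) := by
        rcases eq_or_ne (prjm x) 0 with h' | h'
        · simp [h']
        · exact le_of_lt (hpos _ (hmemm x) h')
      linarith
  have hlieproj : ∀ A ∈ m, ∀ x : g, prjm ⁅A, x⁆ = ⁅A, prj0 x⁆ ∧ prj0 ⁅A, x⁆ = ⁅A, prjm x⁆ := by
    intro A hA x
    have h1 : ⁅A, prj0 x⁆ ∈ m := by
      rw [← lie_skew]
      exact neg_mem (h0m _ (hmem0 x) A hA)
    have h2 : ⁅A, prjm x⁆ ∈ g0 := hmm A hA _ (hmemm x)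
    have h3 := hdec ⁅A, prjm x⁆ ⁅A, prj0 x⁆ h2 h1
    have h4 : ⁅A, prjm x⁆ + ⁅A, prj0 x⁆ = ⁅A, x⁆ := by
      rw [← lie_add]
      congr 1
      rw [add_comm, hsumx x]
    rw [h4] at h3
    exact ⟨h3.2, h3.1⟩
  have hipg_lie : ∀ A ∈ aS, ∀ x y : g, ipg ⁅A, x⁆ y = ipg x ⁅A, y⁆ := by
    intro A hA x y
    have hAm := haM hA
    obtain ⟨hx1, hx2⟩ := hlieproj A hAm x
    obtain ⟨hy1, hy2⟩ := hlieproj A hAm y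
    rw [hipg_apply, hipg_apply, hx1, hx2, hy1, hy2,
      Kskew A (prj0 x) (prjm y), Kskew A (prjm x) (prj0 y)]
    ring
  -- the space b ⊕ p and the operators
  set Vsub := bS ⊔ pS with hVsub
  have hadV : ∀ A ∈ aS, ∀ x ∈ Vsub, ⁅A, x⁆ ∈ Vsub := by
    intro A hA x hx
    obtain ⟨xb, hxb, xp, hxp, rfl⟩ := Submodule.mem_sup.1 hx
    rw [lie_add]
    apply Submodule.add_mem
    · have h : ⁅A, xb⁆ ∈ pS := by
        rw [← lie_skew]
        exact neg_mem (hwd xb hxb A hA)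
      exact Submodule.mem_sup_right h
    · have h : ⁅A, xp⁆ ∈ bS := by
        rw [← lie_skew]
        exact neg_mem (part1 xp hxp A hA)
      exact Submodule.mem_sup_left h
  set T := adR aS Vsub Vsub hadV with hT
  have hdisjbp : ∀ u ∈ pS, ∀ w ∈ bS, u + w = 0 → u = 0 ∧ w = 0 := by
    intro u hu w hw h
    have hu0 : u ∈ g0 := ((hpS u).1 hu).1
    have hwm : w ∈ m := ((hbS w).1 hw).1
    have hum : u ∈ m := by
      have : u = -w := eq_neg_of_add_eq_zero_left h
      rw [this]
      exact neg_mem hwm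
    have hu' : u = 0 := Submodule.disjoint_def.1 hcompl.disjoint u hu0 hum
    refine ⟨hu', ?_⟩
    rw [hu', zero_add] at h
    exact h
  obtain ⟨A0, hA0inj⟩ := exists_generic' (LinearMap.BilinForm.restrict ipg Vsub)
    (fun x y => by
      rw [LinearMap.BilinForm.restrict_apply, LinearMap.BilinForm.restrict_apply,
        LinearMap.domRestrict_apply, LinearMap.domRestrict_apply]
      exact hipg_symm x y)
    (fun v hv => by
      rw [LinearMap.BilinForm.restrict_apply, LinearMap.domRestrict_apply]
      exact hipg_pos _ (fun h => hv (Subtype.ext h)))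
    T
    (fun A x y => by
      rw [LinearMap.BilinForm.restrict_apply, LinearMap.BilinForm.restrict_apply,
        LinearMap.domRestrict_apply, LinearMap.domRestrict_apply]
      exact hipg_lie ↑A A.2 ↑x ↑y)
    (fun A B x => by
      apply Subtype.ext
      show ⁅(A : g), ⁅(B : g), (x : g)⁆⁆ = ⁅(B : g), ⁅(A : g), (x : g)⁆⁆
      have h := lie_lie (A : g) (B : g) (x : g)
      rw [hab _ A.2 _ B.2, zero_lie] at h
      exact (eq_of_sub_eq_zero h.symm)
      )
    (fun v hv => by
      obtain ⟨xb, hxb, xp, hxp, hx⟩ := Submodule.mem_sup.1 v.2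
      have hco : ∀ A' ∈ aS, ⁅A', (v : g)⁆ = 0 := by
        intro A' hA'
        exact congrArg Subtype.val (hv ⟨A', hA'⟩)
      have hb0 : xb = 0 ∧ xp = 0 := by
        have hball : ∀ A' ∈ aS, ⁅xb, A'⁆ = 0 ∧ ⁅xp, A'⁆ = 0 := by
          intro A' hA'
          have h1 : ⁅A', xb⁆ + ⁅A', xp⁆ = 0 := by
            rw [← lie_add, hx]
            exact hco A' hA'
          have h2 : ⁅A', xb⁆ ∈ pS := by
            rw [← lie_skew]
            exact neg_mem (hwd xb hxb A' hA')
          have h3 : ⁅A', xp⁆ ∈ bS := by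
            rw [← lie_skew]
            exact neg_mem (part1 xp hxp A' hA')
          obtain ⟨e1, e2⟩ := hdisjbp _ h2 _ h3 h1
          constructor
          · rw [← lie_skew, e1, neg_zero]
          · rw [← lie_skew, e2, neg_zero]
        constructor
        · exact bzero xb hxb (fun A' hA' => (hball A' hA').1)
        · exact pzero xp hxp (fun A' hA' => (hball A' hA').2)
      apply Subtype.ext
      rw [← hx, hb0.1, hb0.2, add_zero]
      rfl)
  -- regularity consequences
  have hregV : ∀ x ∈ Vsub, ⁅(A0 : g), x⁆ = 0 → x = 0 := by
    intro x hx h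
    have h2 : T A0 ⟨x, hx⟩ = T A0 0 := by
      rw [map_zero]
      exact Subtype.ext h
    have h3 := hA0inj h2
    exact congrArg Subtype.val h3
  have hregb : ∀ B ∈ bS, ⁅B, (A0 : g)⁆ = 0 → B = 0 := by
    intro B hB h
    exact hregV B (Submodule.mem_sup_left hB) (by rw [← lie_skew, h, neg_zero])
  have hregp : ∀ X ∈ pS, ⁅X, (A0 : g)⁆ = 0 → X = 0 := by
    intro X hX h
    exact hregV X (Submodule.mem_sup_right hX) (by rw [← lie_skew, h, neg_zero])
  set adp := adR pS aS bS (fun X hX A hA => part1 X hX A hA) with hadp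
  set adb := adR bS aS pS hwd with hadb
  set φp : ↥pS →ₗ[ℝ] ↥bS := adp.flip A0 with hφp
  set ψb : ↥bS →ₗ[ℝ] ↥pS := adb.flip A0 with hψb
  have hφpco : ∀ X : ↥pS, ((φp X : ↥bS) : g) = ⁅(X : g), (A0 : g)⁆ := fun X => rfl
  have hψbco : ∀ B : ↥bS, ((ψb B : ↥pS) : g) = ⁅(B : g), (A0 : g)⁆ := fun B => rfl
  have hφpinj : Function.Injective φp := by
    intro X Y h
    have h2 : ⁅(X : g), (A0 : g)⁆ = ⁅(Y : g), (A0 : g)⁆ := by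
      rw [← hφpco X, ← hφpco Y, h]
    have h3 : ⁅(X : g) - (Y : g), (A0 : g)⁆ = 0 := by
      rw [sub_lie, h2, sub_self]
    have h4 := hregp _ (pS.sub_mem X.2 Y.2) h3
    exact Subtype.ext (sub_eq_zero.1 h4)
  have hψbinj : Function.Injective ψb := by
    intro X Y h
    have h2 : ⁅(X : g), (A0 : g)⁆ = ⁅(Y : g), (A0 : g)⁆ := by
      rw [← hψbco X, ← hψbco Y, h]
    have h3 : ⁅(X : g) - (Y : g), (A0 : g)⁆ = 0 := by
      rw [sub_lie, h2, sub_self]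
    have h4 := hregb _ (bS.sub_mem X.2 Y.2) h3
    exact Subtype.ext (sub_eq_zero.1 h4)
  have hdim : finrank ℝ ↥pS = finrank ℝ ↥bS :=
    le_antisymm (LinearMap.finrank_le_finrank_of_injective hφpinj)
      (LinearMap.finrank_le_finrank_of_injective hψbinj)
  have hφpsurj : Function.Surjective φp := by
    rw [← LinearMap.range_eq_top]
    apply Submodule.eq_top_of_finrank_eq
    rw [LinearMap.finrank_range_of_inj hφpinj, hdim]
  -- part 5
  have part5 : ∀ Q ∈ prol1 CT, ∃ X ∈ pS,
      ∀ A' A'' : ↥aS, ((Q A' A'' : ↥pS) : g) = ⁅⁅X, (A' : g)⁆, (A'' : g)⁆ := by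
    intro Q hQ
    have hQ1 : ∀ A' : ↥aS, Q A' ∈ CT := hQ.1
    have hQ2 : ∀ A' A'' : ↥aS, Q A' A'' = Q A'' A' := hQ.2
    obtain ⟨B0, hB0b, hB0⟩ := hQ1 A0
    obtain ⟨X, hXval⟩ := hφpsurj ⟨B0, hB0b⟩
    refine ⟨(X : g), X.2, ?_⟩
    have hXA0 : ⁅(X : g), (A0 : g)⁆ = B0 := by
      rw [← hφpco X, hXval]
    intro A' A''
    obtain ⟨B', hB'b, hB'⟩ := hQ1 A'
    have hBeq : ⁅(X : g), (A' : g)⁆ = B' := by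
      have hD : ⁅(X : g), (A' : g)⁆ - B' ∈ bS :=
        bS.sub_mem (part1 _ X.2 _ A'.2) hB'b
      have hcomm0 : ⁅(A' : g), (A0 : g)⁆ = 0 := hab _ A'.2 _ A0.2
      have e1 : ⁅⁅(X : g), (A' : g)⁆, (A0 : g)⁆ = ⁅⁅(X : g), (A0 : g)⁆, (A' : g)⁆ :=
        hjac _ _ _ hcomm0
      have e5 : ((Q A' A0 : ↥pS) : g) = ⁅B', (A0 : g)⁆ := hB' A0
      have e3 : ((Q A0 A' : ↥pS) : g) = ⁅B0, (A' : g)⁆ := hB0 A'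
      have e4 : ((Q A0 A' : ↥pS) : g) = ((Q A' A0 : ↥pS) : g) := by rw [hQ2 A0 A']
      have hz : ⁅⁅(X : g), (A' : g)⁆ - B', (A0 : g)⁆ = 0 := by
        rw [sub_lie, e1, hXA0, ← e3, e4, e5, sub_self]
      exact sub_eq_zero.1 (hregb _ hD hz)
    rw [hB' A'', ← hBeq]
  -- part 3
  have part3 : ∀ X ∈ pS, ∀ Q : ↥aS →ₗ[ℝ] (↥aS →ₗ[ℝ] ↥pS),
      (∀ A' A'' : ↥aS, ((Q A' A'' : ↥pS) : g) = ⁅⁅X, (A' : g)⁆, (A'' : g)⁆) →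
      Q ∈ prol1 CT := by
    intro X hX Q hQ
    constructor
    · intro A'
      exact ⟨⁅X, (A' : g)⁆, part1 X hX _ A'.2, fun A'' => hQ A' A''⟩
    · intro A' A''
      apply Subtype.ext
      rw [hQ A' A'', hQ A'' A']
      exact hjac _ _ _ (hab _ A'.2 _ A''.2)
  -- part 4
  have part4 : ∀ X ∈ pS, (∀ A' A'' : ↥aS, ⁅⁅X, (A' : g)⁆, (A'' : g)⁆ = 0) → X = 0 := by
    intro X hX h
    exact part4' X hX (fun A' hA' A'' hA'' => h ⟨A', hA'⟩ ⟨A'', hA''⟩)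
  -- part 6
  set Ψ0 : ↥pS →ₗ[ℝ] (↥aS →ₗ[ℝ] (↥aS →ₗ[ℝ] ↥pS)) :=
    (LinearMap.llcomp ℝ ↥aS ↥bS (↥aS →ₗ[ℝ] ↥pS) adb).comp adp with hΨ0
  have hΨ0co : ∀ (X : ↥pS) (A' A'' : ↥aS),
      ((Ψ0 X A' A'' : ↥pS) : g) = ⁅⁅(X : g), (A' : g)⁆, (A'' : g)⁆ := fun X A' A'' => rfl
  have hmemprol : ∀ X : ↥pS, Ψ0 X ∈ prol1 CT :=
    fun X => part3 (X : g) X.2 (Ψ0 X) (hΨ0co X)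
  set Ψ : ↥pS →ₗ[ℝ] ↥(prol1 CT) := Ψ0.codRestrict (prol1 CT) hmemprol with hΨ
  have hΨbij : Function.Bijective Ψ := by
    constructor
    · intro X Y h
      have h2 : Ψ0 X = Ψ0 Y := congrArg Subtype.val h
      have h3 : ∀ A' A'' : ↥aS, ⁅⁅(X : g) - (Y : g), (A' : g)⁆, (A'' : g)⁆ = 0 := by
        intro A' A''
        have e : ((Ψ0 X A' A'' : ↥pS) : g) = ((Ψ0 Y A' A'' : ↥pS) : g) := by rw [h2]
        rw [hΨ0co, hΨ0co] at e
        rw [sub_lie, sub_lie, e, sub_self]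
      have h4 := part4 _ (pS.sub_mem X.2 Y.2) h3
      exact Subtype.ext (sub_eq_zero.1 h4)
    · rintro ⟨Q, hQ⟩
      obtain ⟨X, hX, hco⟩ := part5 Q hQ
      refine ⟨⟨X, hX⟩, ?_⟩
      apply Subtype.ext
      show Ψ0 ⟨X, hX⟩ = Q
      apply LinearMap.ext
      intro A'
      apply LinearMap.ext
      intro A''
      exact Subtype.ext ((hΨ0co ⟨X, hX⟩ A' A'').trans (hco A' A'').symm)
  have part6 : finrank ℝ ↥(prol1 CT) = finrank ℝ ↥pS :=
    (LinearEquiv.ofBijective Ψ hΨbij).finrank_eq.symm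
  -- rank of the tableau
  have hadbinj : Function.Injective adb := by
    intro B C h
    have h2 : ∀ A' ∈ aS, ⁅(B : g) - (C : g), A'⁆ = 0 := by
      intro A' hA'
      have e : ((adb B ⟨A', hA'⟩ : ↥pS) : g) = ((adb C ⟨A', hA'⟩ : ↥pS) : g) := by rw [h]
      have e1 : ((adb B ⟨A', hA'⟩ : ↥pS) : g) = ⁅(B : g), A'⁆ := rfl
      have e2 : ((adb C ⟨A', hA'⟩ : ↥pS) : g) = ⁅(C : g), A'⁆ := rfl
      rw [e1, e2] at e
      rw [sub_lie, e, sub_self]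
    have h3 := bzero _ (bS.sub_mem B.2 C.2) h2
    exact Subtype.ext (sub_eq_zero.1 h3)
  have hrange_adb : LinearMap.range adb = CT := by
    ext F
    constructor
    · rintro ⟨B, rfl⟩
      exact ⟨(B : g), B.2, fun A' => rfl⟩
    · rintro ⟨X, hX, hF⟩
      refine ⟨⟨X, hX⟩, ?_⟩
      apply LinearMap.ext
      intro A'
      exact Subtype.ext (hF A').symm
  have hCTrk : finrank ℝ ↥CT = finrank ℝ ↥bS := by
    rw [← hrange_adb, LinearMap.finrank_range_of_inj hadbinj]
  -- part 7
  have part7 : ∀ F : GenericFlag CT n, ∀ j : Fin n,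
      charF CT F j = if (j : ℕ) = 0 then finrank ℝ ↥bS else 0 := by
    intro F j
    have hn1 : 1 ≤ n := by have := j.2; omega
    obtain ⟨Areg, hAreg_ne, hAregb⟩ :
        ∃ A : ↥aS, A ≠ 0 ∧ ∀ B ∈ bS, ⁅B, (A : g)⁆ = 0 → B = 0 := by
      by_cases h : A0 = 0
      · have hV0 : ∀ x ∈ Vsub, x = 0 := by
          intro x hx
          apply hregV x hx
          rw [h]
          simp
        have hnt : Nontrivial ↥aS := by
          apply Module.nontrivial_of_finrank_pos (R := ℝ)
          rw [hn]
          omega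
        obtain ⟨A, hA⟩ := exists_ne (0 : ↥aS)
        exact ⟨A, hA, fun B hB _ => hV0 B (Submodule.mem_sup_left hB)⟩
      · exact ⟨A0, h, hregb⟩
    have htkerW : tKer CT (ℝ ∙ Areg) = ⊥ := by
      rw [Submodule.eq_bot_iff]
      rintro Q ⟨hQmem, hQvan⟩
      obtain ⟨B, hBb, hB⟩ := hQmem
      have h0 : Q Areg = 0 := hQvan Areg (Submodule.mem_span_singleton_self _)
      have hBA : ⁅B, (Areg : g)⁆ = 0 := by
        rw [← hB Areg, h0]
        rfl
      have hB0 : B = 0 := hAregb B hBb hBA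
      apply LinearMap.ext
      intro A'
      apply Subtype.ext
      rw [hB A', hB0, zero_lie]
      rfl
    have hk1lt : (1 : ℕ) < n + 1 := by omega
    set k1 : Fin (n + 1) := ⟨1, hk1lt⟩ with hk1
    have hW1 : finrank ℝ ↥(ℝ ∙ Areg) = ((k1 : Fin (n+1)) : ℕ) :=
      finrank_span_singleton hAreg_ne
    have hbot1 : tKer CT (F.fl k1) = ⊥ := by
      have hle := F.generic k1 (ℝ ∙ Areg) hW1
      have h0 : finrank ℝ ↥(⊥ : Submodule ℝ (↥aS →ₗ[ℝ] ↥pS)) = 0 := finrank_bot ℝ _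
      rw [htkerW, h0, Nat.le_zero] at hle
      exact Submodule.finrank_eq_zero.1 hle
    have hbotk : ∀ k : Fin (n + 1), 1 ≤ (k : ℕ) → tKer CT (F.fl k) = ⊥ := by
      intro k hk
      rw [Submodule.eq_bot_iff]
      rintro Q ⟨hQmem, hQvan⟩
      have hQ1 : Q ∈ tKer CT (F.fl k1) :=
        ⟨hQmem, fun x hx => hQvan x (F.mono (show k1 ≤ k from hk) hx)⟩
      rw [hbot1] at hQ1
      exact (Submodule.mem_bot ℝ).1 hQ1
    have htker0 : ∀ k : Fin (n + 1), (k : ℕ) = 0 → tKer CT (F.fl k) = CT := by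
      intro k hk
      have hfl : F.fl k = ⊥ := by
        have h := F.rk k
        rw [hk] at h
        exact Submodule.finrank_eq_zero.1 h
      ext Q
      constructor
      · rintro ⟨h1, _⟩
        exact h1
      · intro h1
        refine ⟨h1, fun x hx => ?_⟩
        rw [hfl] at hx
        rw [(Submodule.mem_bot ℝ).1 hx]
        simp
    by_cases hj : (j : ℕ) = 0
    · rw [if_pos hj]
      have hcast : ((j.castSucc : Fin (n + 1)) : ℕ) = 0 := by
        rw [Fin.coe_castSucc]
        exact hj
      have hsucc : 1 ≤ ((j.succ : Fin (n + 1)) : ℕ) := by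
        rw [Fin.val_succ]
        omega
      show finrank ℝ ↥(tKer CT (F.fl j.castSucc)) - finrank ℝ ↥(tKer CT (F.fl j.succ)) = _
      rw [htker0 _ hcast, hbotk _ hsucc, hCTrk]
      simp
    · rw [if_neg hj]
      have hc : 1 ≤ ((j.castSucc : Fin (n + 1)) : ℕ) := by
        rw [Fin.coe_castSucc]
        omega
      have hs : 1 ≤ ((j.succ : Fin (n + 1)) : ℕ) := by
        rw [Fin.val_succ]
        omega
      show finrank ℝ ↥(tKer CT (F.fl j.castSucc)) - finrank ℝ ↥(tKer CT (F.fl j.succ)) = 0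
      rw [hbotk _ hc, hbotk _ hs]
      omega
  -- part 8
  have part8 : Involutive CT n := by
    intro F
    have hsum : ∑ j : Fin n, ((j : ℕ) + 1) * charF CT F j
        = ∑ j : Fin n, ((j : ℕ) + 1) * (if (j : ℕ) = 0 then finrank ℝ ↥bS else 0) :=
      Finset.sum_congr rfl (fun j _ => by rw [part7 F j])
    show finrank ℝ ↥(prol1 CT) = _
    rw [part6, hdim, hsum]
    rcases Nat.eq_zero_or_pos n with hn0 | hnpos
    · subst hn0
      simp only [Finset.univ_eq_empty, Finset.sum_empty]
      have haSbot : aS = ⊥ := Submodule.finrank_eq_zero.1 hn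
      have hmbot : ∀ x ∈ m, x = 0 := by
        intro x hx
        have hsp : (ℝ ∙ x) ≤ m := by rwa [Submodule.span_singleton_le_iff_mem]
        have hsub : aS ≤ (ℝ ∙ x) := by
          rw [haSbot]
          exact bot_le
        have habel : ∀ u ∈ (ℝ ∙ x), ∀ v ∈ (ℝ ∙ x), ⁅u, v⁆ = 0 := by
          intro u hu v hv
          obtain ⟨c, rfl⟩ := Submodule.mem_span_singleton.1 hu
          obtain ⟨d, rfl⟩ := Submodule.mem_span_singleton.1 hv
          simp [lie_smul, smul_lie]
        have := hamax (ℝ ∙ x) hsp hsub habel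
        have hx2 : x ∈ aS := by
          rw [← this]
          exact Submodule.mem_span_singleton_self x
        rw [haSbot] at hx2
        exact (Submodule.mem_bot ℝ).1 hx2
      have hbSbot : bS = ⊥ := by
        rw [Submodule.eq_bot_iff]
        exact fun x hx => hmbot x ((hbS x).1 hx).1
      rw [hbSbot]
      exact finrank_bot ℝ g
    · have : ∑ j : Fin n, ((j : ℕ) + 1) * (if (j : ℕ) = 0 then finrank ℝ ↥bS else 0)
          = finrank ℝ ↥bS := by
        rw [Finset.sum_eq_single (⟨0, hnpos⟩ : Fin n)]
        · simp
        · intro b _ hb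
          have hb0 : (b : ℕ) ≠ 0 := fun h => hb (Fin.ext h)
          rw [if_neg hb0, mul_zero]
        · intro h
          exact absurd (Finset.mem_univ _) h
      rw [this]
  exact ⟨part1, part2, part3, part4, part5, part6, part7, part8⟩
end

section
/- For the G/G_0-system, the nonhomogeneous term Φ_B(A_1,A_2) = [[A_1,B],[A_2,B]] takes values in the image of the Spencer differential δ^{1,1}: explicitly, defining S_B ∈ Hom(a, b) by S_B(A) = [B,[A,B]]_b (the b-component of [B,[A,B]] ∈ m), one has 2Φ_B(A_1,A_2) = S_B(A_1)-contracted-alternation, i.e. 2[[A_1,B],[A_2,B]] = [δ^{1,1}(S_B)](A_1,A_2) for all A_1, A_2 ∈ a and B ∈ b. -/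
/-- For the `G/G₀`-system, the nonhomogeneous term
`Φ_B(A₁,A₂) = [[A₁,B],[A₂,B]]` takes values in the image of the Spencer differential
`δ^{1,1}`: defining `S_B ∈ Hom(a,b)` by `S_B(A) = [B,[A,B]]_b` (the `b`-component of
`[B,[A,B]] ∈ m = a ⊕ b`, written `[B,[A_i,B]] = t_i + S_i` with `t_i ∈ a`, `S_i ∈ b`),
one has `2Φ_B(A₁,A₂) = δ^{1,1}(S_B)(A₁,A₂) = [S_B(A₁),A₂] − [S_B(A₂),A₁]`
for all `A₁, A₂ ∈ a` and `B ∈ b`. -/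
theorem phi_in_image_of_delta
    (g : Type*) [LieRing g] [LieAlgebra ℝ g]
    (aS bS : Submodule ℝ g)
    (hab : ∀ x ∈ aS, ∀ y ∈ aS, ⁅x, y⁆ = 0)
    (A₁ A₂ : g) (hA₁ : A₁ ∈ aS) (hA₂ : A₂ ∈ aS)
    (B : g) (hB : B ∈ bS)
    (t₁ S₁ t₂ S₂ : g)
    (ht₁ : t₁ ∈ aS) (hS₁ : S₁ ∈ bS) (ht₂ : t₂ ∈ aS) (hS₂ : S₂ ∈ bS)
    (hd₁ : ⁅B, ⁅A₁, B⁆⁆ = t₁ + S₁) (hd₂ : ⁅B, ⁅A₂, B⁆⁆ = t₂ + S₂) :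
    (2 : ℝ) • ⁅⁅A₁, B⁆, ⁅A₂, B⁆⁆ = ⁅S₁, A₂⁆ - ⁅S₂, A₁⁆ := by
  have hA12 : ⁅A₁, A₂⁆ = 0 := hab A₁ hA₁ A₂ hA₂
  have hA2t1 : ⁅A₂, t₁⁆ = 0 := hab A₂ hA₂ t₁ ht₁
  have hA1t2 : ⁅A₁, t₂⁆ = 0 := hab A₁ hA₁ t₂ ht₂
  have h1 : ⁅⁅A₁, B⁆, ⁅A₂, B⁆⁆ = -⁅⁅A₁, ⁅A₂, B⁆⁆, B⁆ + ⁅S₁, A₂⁆ := by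
    have e0 : ⁅A₂, A₁⁆ = 0 := by rw [← lie_skew, hA12, neg_zero]
    have e1 : ⁅⁅A₁, B⁆, A₂⁆ = -⁅A₁, ⁅A₂, B⁆⁆ := by
      rw [← lie_skew ⁅A₁, B⁆ A₂, leibniz_lie A₂ A₁ B, e0, zero_lie, zero_add]
    have e2 : ⁅⁅A₁, B⁆, B⁆ = -(t₁ + S₁) := by
      rw [← lie_skew ⁅A₁, B⁆ B, hd₁]
    calc ⁅⁅A₁, B⁆, ⁅A₂, B⁆⁆ = ⁅⁅⁅A₁, B⁆, A₂⁆, B⁆ + ⁅A₂, ⁅⁅A₁, B⁆, B⁆⁆ := by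
          rw [leibniz_lie]
      _ = -⁅⁅A₁, ⁅A₂, B⁆⁆, B⁆ + ⁅S₁, A₂⁆ := by
          rw [e1, e2, neg_lie, lie_neg, lie_add, hA2t1, zero_add, lie_skew, lie_skew S₁ A₂]
  have h2 : ⁅⁅A₂, B⁆, ⁅A₁, B⁆⁆ = -⁅⁅A₁, ⁅A₂, B⁆⁆, B⁆ + ⁅S₂, A₁⁆ := by
    have e1 : ⁅⁅A₂, B⁆, A₁⁆ = -⁅A₁, ⁅A₂, B⁆⁆ := by
      rw [← lie_skew ⁅A₂, B⁆ A₁]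
    have e2 : ⁅⁅A₂, B⁆, B⁆ = -(t₂ + S₂) := by
      rw [← lie_skew ⁅A₂, B⁆ B, hd₂]
    calc ⁅⁅A₂, B⁆, ⁅A₁, B⁆⁆ = ⁅⁅⁅A₂, B⁆, A₁⁆, B⁆ + ⁅A₁, ⁅⁅A₂, B⁆, B⁆⁆ := by
          rw [leibniz_lie]
      _ = -⁅⁅A₁, ⁅A₂, B⁆⁆, B⁆ + ⁅S₂, A₁⁆ := by
          rw [e1, e2, neg_lie, lie_neg, lie_add, hA1t2, zero_add, lie_skew, lie_skew S₂ A₁]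
  have h3 : ⁅⁅A₂, B⁆, ⁅A₁, B⁆⁆ = -⁅⁅A₁, B⁆, ⁅A₂, B⁆⁆ := (lie_skew _ _).symm
  rw [two_smul]
  rw [h3] at h2
  linear_combination (norm := abel) h1 - h2
end

section
/- For the wave map tableau A ⊂ Hom(R², g ⊕ g), the Spencer differential δ^{1,1}: C^{1,1}(A) = A ⊗ Λ¹(a*) → C^{0,2}(A) = (g ⊕ g) ⊗ Λ²(a*) is surjective; explicitly, for σ = ((X_{11}dx + X_{12}dy)-component, (X_{21}dx + X_{22}dy)-component) one has δ^{1,1}(σ) = (X_{21}, −X_{12}) dx∧dy. Consequently H^{0,2}(A) = 0. -/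
/-- The wave map tableau `A = {(X₂ dy, X₁ dx) : X₁, X₂ ∈ V} ⊂ Hom(ℝ², V ⊕ V)`,
consisting of the linear maps `(u,v) ↦ (v • X₂, u • X₁)`. -/
noncomputable def waveTableau (V : Type*) [AddCommGroup V] [Module ℝ V] :
    Submodule ℝ ((ℝ × ℝ) →ₗ[ℝ] (V × V)) where
  carrier := {F | ∃ X₁ X₂ : V, ∀ u v : ℝ, F (u, v) = (v • X₂, u • X₁)}
  add_mem' := by
    rintro F G ⟨X₁, X₂, hF⟩ ⟨Y₁, Y₂, hG⟩
    exact ⟨X₁ + Y₁, X₂ + Y₂, fun u v => by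
      simp [hF u v, hG u v, smul_add, Prod.ext_iff]⟩
  zero_mem' := ⟨0, 0, fun u v => by simp <;> rfl⟩
  smul_mem' := by
    rintro c F ⟨X₁, X₂, hF⟩
    exact ⟨c • X₁, c • X₂, fun u v => by
      simp [hF u v, Prod.ext_iff, smul_comm c]⟩

/-- For the wave map tableau `A ⊂ Hom(ℝ², V ⊕ V)`, the Spencer
differential `δ^{1,1} : C^{1,1}(A) = A ⊗ Λ¹(a*) → C^{0,2}(A) = (V ⊕ V) ⊗ Λ²(a*)` is
surjective; explicitly, for `σ ∈ Hom(a, A)` with `σ(dx-dir)` given by `(P₂, P₁)` and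
`σ(dy-dir)` by `(Q₂, Q₁)`, one has `δ^{1,1}(σ) = (P₂, −Q₁) dx ∧ dy`.  Consequently
`H^{0,2}(A) = 0`. -/
theorem wave_delta11_surjective (V : Type*) [AddCommGroup V] [Module ℝ V] :
    (∀ (σ : (ℝ × ℝ) →ₗ[ℝ] ((ℝ × ℝ) →ₗ[ℝ] (V × V))),
      (∀ w : ℝ × ℝ, σ w ∈ waveTableau V) →
      ∀ P₁ P₂ Q₁ Q₂ : V,
        (∀ u v : ℝ, σ (1, 0) (u, v) = (v • P₂, u • P₁)) →
        (∀ u v : ℝ, σ (0, 1) (u, v) = (v • Q₂, u • Q₁)) →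
        σ (1, 0) (0, 1) - σ (0, 1) (1, 0) = (P₂, -Q₁)) ∧
    (∀ Z : V × V, ∃ σ : (ℝ × ℝ) →ₗ[ℝ] ((ℝ × ℝ) →ₗ[ℝ] (V × V)),
      (∀ w : ℝ × ℝ, σ w ∈ waveTableau V) ∧
      ∀ w w' : ℝ × ℝ, σ w w' - σ w' w = (w.1 * w'.2 - w.2 * w'.1) • Z) := by
  constructor
  · intro σ _ P₁ P₂ Q₁ Q₂ h1 h2
    rw [h1 0 1, h2 1 0]
    simp [Prod.ext_iff]
  · intro Z
    refine ⟨LinearMap.mk₂ ℝ (fun w p => (p.2 • w.1 • Z.1, p.1 • (-w.2) • Z.2))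
      (fun w w' p => by refine Prod.ext ?_ ?_ <;> simp <;> module)
      (fun c w p => by refine Prod.ext ?_ ?_ <;> simp <;> module)
      (fun w p p' => by refine Prod.ext ?_ ?_ <;> simp <;> module)
      (fun c w p => by refine Prod.ext ?_ ?_ <;> simp <;> module), ?_, ?_⟩
    · intro w
      exact ⟨-w.2 • Z.2, w.1 • Z.1, fun u v => rfl⟩
    · intro w w'
      simp [Prod.ext_iff, smul_smul, sub_smul, smul_sub]
      constructor <;> ring_nf <;> simp [sub_smul, mul_smul, neg_smul] <;> abel
end

section
/- For the wave map tableau A ⊂ Hom(R², g ⊕ g), the Spencer differential δ^{2,1}: C^{2,1}(A) = A^{(1)} ⊗ Λ¹(a*) → C^{1,2}(A) = A ⊗ Λ²(a*) is surjective, hence H^{1,2}(A) = 0; together with the involutivity of A^{(1)} this shows A is 2-acyclic (H^{q,2}(A) = 0 for all q ≥ 1). -/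
set_option maxSynthPendingDepth 3

/-- The Spencer (Koszul) differential on `b ⊗ S^{q+1}(a*) ⊗ Λ^p(a*)`, with elements
represented as functions `(Fin p → a) → (Fin (q+1) → a) → b` (alternating in the first
group of arguments, symmetric in the second):
`(δφ)(X_1,…,X_{p+1}) = Σ_k (−1)^{k+1} i(X_k) φ(X_1,…,X̂_k,…,X_{p+1})`. -/
noncomputable def spencerD {a b : Type*} [AddCommGroup b] [Module ℝ b] {p q : ℕ}
    (φ : (Fin p → a) → (Fin (q + 1) → a) → b) :
    (Fin (p + 1) → a) → (Fin q → a) → b :=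
  fun X Y => ∑ k : Fin (p + 1),
    ((-1 : ℝ) ^ ((k : ℕ) + 1)) • φ (fun j => X (k.succAbove j)) (Fin.cons (X k) Y)


/-- `φ` represents an element of the Spencer cochain space
`C^{q,p}(A) = A^{(q-1)} ⊗ Λ^p(a*) ⊂ b ⊗ S^q(a*) ⊗ Λ^p(a*)` (with `A^{(-1)} = b`):
it is multilinear, alternating in the `p` exterior arguments, symmetric in the `q`
symmetric arguments, and each contraction fixing all but one symmetric slot lies
in the tableau `A`. -/
def IsSpencerCochain {a b : Type*} [AddCommGroup a] [Module ℝ a]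
    [AddCommGroup b] [Module ℝ b] (A : Submodule ℝ (a →ₗ[ℝ] b)) (q p : ℕ)
    (φ : (Fin p → a) → (Fin q → a) → b) : Prop :=
  (∀ (X : Fin p → a) (i : Fin p) (c : ℝ) (u v : a) (Y : Fin q → a),
      φ (Function.update X i (c • u + v)) Y
        = c • φ (Function.update X i u) Y + φ (Function.update X i v) Y) ∧
  (∀ (X : Fin p → a) (Y : Fin q → a) (j : Fin q) (c : ℝ) (u v : a),
      φ X (Function.update Y j (c • u + v))
        = c • φ X (Function.update Y j u) + φ X (Function.update Y j v)) ∧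
  (∀ (X : Fin p → a) (Y : Fin q → a) (i j : Fin p), i ≠ j → X i = X j → φ X Y = 0) ∧
  (∀ (X : Fin p → a) (Y : Fin q → a) (σ : Equiv.Perm (Fin q)), φ X (Y ∘ σ) = φ X Y) ∧
  (∀ (X : Fin p → a) (w : Fin q → a) (j : Fin q),
      ∃ T ∈ A, ∀ Z : a, φ X (Function.update w j Z) = T Z)

section AuxML
variable {n : ℕ} {W : Type*} [AddCommGroup W] [Module ℝ W]
  {F : (Fin n → ℝ × ℝ) → W}

lemma upd_zero
    (hmul : ∀ (Y : Fin n → ℝ × ℝ) (j : Fin n) (c : ℝ) (u v : ℝ × ℝ),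
      F (Function.update Y j (c • u + v)) = c • F (Function.update Y j u) + F (Function.update Y j v))
    (Y : Fin n → ℝ × ℝ) (j : Fin n) : F (Function.update Y j 0) = 0 := by
  have h := hmul Y j 1 0 0
  simp only [one_smul, add_zero] at h
  exact (add_left_cancel (h.symm.trans (add_zero _).symm))

lemma upd_smul
    (hmul : ∀ (Y : Fin n → ℝ × ℝ) (j : Fin n) (c : ℝ) (u v : ℝ × ℝ),
      F (Function.update Y j (c • u + v)) = c • F (Function.update Y j u) + F (Function.update Y j v))
    (Y : Fin n → ℝ × ℝ) (j : Fin n) (c : ℝ) (u : ℝ × ℝ) :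
    F (Function.update Y j (c • u)) = c • F (Function.update Y j u) := by
  have h := hmul Y j c u 0
  rwa [add_zero, upd_zero hmul, add_zero] at h

lemma upd_decomp
    (hmul : ∀ (Y : Fin n → ℝ × ℝ) (j : Fin n) (c : ℝ) (u v : ℝ × ℝ),
      F (Function.update Y j (c • u + v)) = c • F (Function.update Y j u) + F (Function.update Y j v))
    (Y : Fin n → ℝ × ℝ) (j : Fin n) (w : ℝ × ℝ) :
    F (Function.update Y j w) = w.1 • F (Function.update Y j (1, 0)) + w.2 • F (Function.update Y j (0, 1)) := by
  have hw : w = w.1 • ((1:ℝ), (0:ℝ)) + w.2 • ((0:ℝ), (1:ℝ)) := by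
    ext <;> simp
  rw [show (Function.update Y j w) = Function.update Y j (w.1 • ((1:ℝ),(0:ℝ)) + w.2 • ((0:ℝ),(1:ℝ))) from by rw [← hw]]
  rw [hmul Y j w.1 ((1:ℝ),(0:ℝ)) (w.2 • ((0:ℝ),(1:ℝ))), upd_smul hmul]

lemma prod_structure
    (e : ℝ × ℝ) (c : ℝ × ℝ → ℝ)
    (hkill : ∀ (Y : Fin n → ℝ × ℝ) (j : Fin n) (w : ℝ × ℝ),
      F (Function.update Y j w) = c w • F (Function.update Y j e))
    (Y : Fin n → ℝ × ℝ) : F Y = (∏ i, c (Y i)) • F (fun _ => e) := by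
  have key : ∀ s : Finset (Fin n),
      F Y = (∏ i ∈ s, c (Y i)) • F (s.piecewise (fun _ => e) Y) := by
    intro s
    induction s using Finset.induction with
    | empty => simp
    | insert _ _ hk ih =>
      rename_i k s
      rw [ih]
      have h1 : s.piecewise (fun _ => e) Y
          = Function.update (s.piecewise (fun _ => e) Y) k (Y k) := by
        rw [show Y k = (s.piecewise (fun _ => e) Y) k from (Finset.piecewise_eq_of_notMem _ _ _ hk).symm,
          Function.update_eq_self]
      rw [h1, hkill, ← Finset.piecewise_insert, Finset.prod_insert hk, smul_smul, mul_comm]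
  have h := key Finset.univ
  simpa using h

lemma prod_update_comp (Y : Fin n → ℝ × ℝ) (j : Fin n) (z : ℝ × ℝ) (f : ℝ × ℝ → ℝ) :
    ∏ i, f (Function.update Y j z i) = f z * ∏ i ∈ Finset.univ \ {j}, f (Y i) := by
  have h : (fun i => f (Function.update Y j z i)) = Function.update (fun i => f (Y i)) j (f z) := by
    funext i
    by_cases h : i = j
    · subst h; simp
    · simp [Function.update_of_ne h]
  calc ∏ i, f (Function.update Y j z i) = ∏ i, Function.update (fun i => f (Y i)) j (f z) i := by rw [h]
    _ = f z * ∏ i ∈ Finset.univ \ {j}, f (Y i) := Finset.prod_update_of_mem (Finset.mem_univ j) _ _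

end AuxML

lemma updv0 {α : Type*} (a b c : α) : Function.update ![a, b] (0 : Fin 2) c = ![c, b] := by
  funext i; fin_cases i <;> simp [Function.update]

lemma updv1 {α : Type*} (a b c : α) : Function.update ![a, b] (1 : Fin 2) c = ![a, c] := by
  funext i; fin_cases i <;> simp [Function.update]

lemma vec2_eta {α : Type*} (X : Fin 2 → α) : X = ![X 0, X 1] := by
  funext i; fin_cases i <;> rfl

lemma det_expand {W : Type*} [AddCommGroup W] [Module ℝ W]
    (G : (Fin 2 → ℝ × ℝ) → W)
    (hmul : ∀ (X : Fin 2 → ℝ × ℝ) (i : Fin 2) (c : ℝ) (u v : ℝ × ℝ),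
      G (Function.update X i (c • u + v)) = c • G (Function.update X i u) + G (Function.update X i v))
    (halt : ∀ (X : Fin 2 → ℝ × ℝ) (i j : Fin 2), i ≠ j → X i = X j → G X = 0)
    (X : Fin 2 → ℝ × ℝ) :
    G X = ((X 0).1 * (X 1).2 - (X 0).2 * (X 1).1) • G ![(1, 0), (0, 1)] := by
  have hDl : ∀ (b z : ℝ × ℝ), G ![z, b] = z.1 • G ![(1,0), b] + z.2 • G ![(0,1), b] := by
    intro b z
    have h := upd_decomp hmul ![z, b] 0 z
    rwa [updv0, updv0, updv0] at h
  have hDr : ∀ (a z : ℝ × ℝ), G ![a, z] = z.1 • G ![a, (1,0)] + z.2 • G ![a, (0,1)] := by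
    intro a z
    have h := upd_decomp hmul ![a, z] 1 z
    rwa [updv1, updv1, updv1] at h
  have hdiag : ∀ c : ℝ × ℝ, G ![c, c] = 0 := fun c =>
    halt ![c, c] 0 1 (by decide) (by simp)
  have hanti : G ![((0:ℝ),(1:ℝ)), ((1:ℝ),(0:ℝ))] = -G ![((1:ℝ),(0:ℝ)), ((0:ℝ),(1:ℝ))] := by
    have h0 := hdiag ((1:ℝ), (1:ℝ))
    rw [hDl ((1:ℝ),(1:ℝ)) ((1:ℝ),(1:ℝ)), hDr ((1:ℝ),(0:ℝ)) ((1:ℝ),(1:ℝ)),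
      hDr ((0:ℝ),(1:ℝ)) ((1:ℝ),(1:ℝ))] at h0
    simp only [hdiag, one_smul, smul_zero, zero_add, add_zero] at h0
    rw [eq_neg_iff_add_eq_zero, add_comm]
    exact h0
  calc G X = G ![X 0, X 1] := by rw [← vec2_eta]
    _ = (X 0).1 • G ![(1,0), X 1] + (X 0).2 • G ![(0,1), X 1] := hDl _ _
    _ = (X 0).1 • ((X 1).1 • G ![(1,0),(1,0)] + (X 1).2 • G ![(1,0),(0,1)])
        + (X 0).2 • ((X 1).1 • G ![(0,1),(1,0)] + (X 1).2 • G ![(0,1),(0,1)]) := by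
        rw [hDr ((1:ℝ),(0:ℝ)) (X 1), hDr ((0:ℝ),(1:ℝ)) (X 1)]
    _ = ((X 0).1 * (X 1).2 - (X 0).2 * (X 1).1) • G ![(1, 0), (0, 1)] := by
        rw [hdiag, hdiag, hanti]
        module

section WAux
variable {V : Type*} [AddCommGroup V] [Module ℝ V]

noncomputable def wmap (b₁ b₂ : V) : (ℝ × ℝ) →ₗ[ℝ] (V × V) where
  toFun := fun w => (w.2 • b₂, w.1 • b₁)
  map_add' := by intro x y; simp [add_smul, Prod.ext_iff]
  map_smul' := by intro c x; simp [smul_smul, Prod.ext_iff]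

@[simp] lemma wmap_apply (b₁ b₂ : V) (z : ℝ × ℝ) :
    wmap b₁ b₂ z = (z.2 • b₂, z.1 • b₁) := rfl

lemma wmap_mem (b₁ b₂ : V) : wmap b₁ b₂ ∈ waveTableau V :=
  ⟨b₁, b₂, fun _ _ => rfl⟩

noncomputable def muMap (X₁ X₂ : V) :
    (ℝ × ℝ) →ₗ[ℝ] ((ℝ × ℝ) →ₗ[ℝ] ((ℝ × ℝ) →ₗ[ℝ] (V × V))) :=
  LinearMap.mk₂ ℝ (fun w w' => wmap ((-(w.2 * w'.1)) • X₁) ((w.1 * w'.2) • X₂))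
    (fun m₁ m₂ n => by
      refine LinearMap.ext fun z => ?_
      simp only [wmap_apply, LinearMap.add_apply, Prod.fst_add, Prod.snd_add,
        Prod.mk_add_mk, Prod.mk.injEq]
      constructor <;> module)
    (fun c m n => by
      refine LinearMap.ext fun z => ?_
      simp only [wmap_apply, LinearMap.smul_apply, Prod.smul_fst, Prod.smul_snd,
        Prod.smul_mk, smul_eq_mul, Prod.mk.injEq]
      constructor <;> module)
    (fun m n₁ n₂ => by
      refine LinearMap.ext fun z => ?_
      simp only [wmap_apply, LinearMap.add_apply, Prod.fst_add, Prod.snd_add,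
        Prod.mk_add_mk, Prod.mk.injEq]
      constructor <;> module)
    (fun c m n => by
      refine LinearMap.ext fun z => ?_
      simp only [wmap_apply, LinearMap.smul_apply, Prod.smul_fst, Prod.smul_snd,
        Prod.smul_mk, smul_eq_mul, Prod.mk.injEq]
      constructor <;> module)

end WAux

/-- For the wave map tableau `A ⊂ Hom(ℝ², V ⊕ V)`, the Spencer
differential `δ^{2,1} : C^{2,1}(A) = A^{(1)} ⊗ Λ¹ → C^{1,2}(A) = A ⊗ Λ²` is surjective,
hence `H^{1,2}(A) = 0`; together with the involutivity of `A^{(1)}` this shows that `A`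
is 2-acyclic: `H^{q,2}(A) = 0` for all `q ≥ 1` (since `dim a = 2`, every element of
`C^{q,2}(A)` is `δ`-closed, so vanishing means every cochain in `C^{q,2}(A)` is the
`δ`-image of an element of `C^{q+1,1}(A)`). -/

theorem wave_tableau_two_acyclic (V : Type*) [AddCommGroup V] [Module ℝ V]
    [FiniteDimensional ℝ V] :
    (∀ T ∈ waveTableau V, ∃ μ : (ℝ × ℝ) →ₗ[ℝ] ((ℝ × ℝ) →ₗ[ℝ] ((ℝ × ℝ) →ₗ[ℝ] (V × V))),
        (∀ w : ℝ × ℝ, μ w ∈ prol1 (waveTableau V)) ∧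
        ∀ w w' : ℝ × ℝ, μ w w' - μ w' w = (w.1 * w'.2 - w.2 * w'.1) • T) ∧
    (∀ (q : ℕ) (φ : (Fin 2 → ℝ × ℝ) → (Fin (q + 1) → ℝ × ℝ) → V × V),
        IsSpencerCochain (waveTableau V) (q + 1) 2 φ →
        ∃ ψ : (Fin 1 → ℝ × ℝ) → (Fin (q + 2) → ℝ × ℝ) → V × V,
          IsSpencerCochain (waveTableau V) (q + 2) 1 ψ ∧ spencerD ψ = φ) := by
  constructor
  · rintro T ⟨X₁, X₂, hT⟩
    refine ⟨muMap X₁ X₂, fun w => ⟨fun w' => ?_, fun w' w'' => ?_⟩, fun w w' => ?_⟩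
    · simp only [muMap, LinearMap.mk₂_apply]
      exact wmap_mem _ _
    · simp only [muMap, LinearMap.mk₂_apply, wmap_apply, Prod.mk.injEq]
      constructor <;> module
    · refine LinearMap.ext fun z => ?_
      have hz := hT z.1 z.2
      simp only [muMap, LinearMap.mk₂_apply, LinearMap.sub_apply, wmap_apply,
        LinearMap.smul_apply]
      rw [show T z = T (z.1, z.2) from rfl, hz]
      simp only [Prod.smul_mk, Prod.mk_sub_mk, Prod.mk.injEq, smul_eq_mul]
      constructor <;> module
  · intro q φ hφ
    obtain ⟨hlin1, hlin2, halt, hsym, hcon⟩ := hφ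
    set E : Fin 2 → ℝ × ℝ := ![(1,0),(0,1)] with hE
    set F1 : (Fin (q+1) → ℝ × ℝ) → V := fun Y => (φ E Y).1 with hF1
    set F2 : (Fin (q+1) → ℝ × ℝ) → V := fun Y => (φ E Y).2 with hF2
    have hm1 : ∀ (Y : Fin (q+1) → ℝ × ℝ) (j : Fin (q+1)) (c : ℝ) (u v : ℝ × ℝ),
        F1 (Function.update Y j (c • u + v))
          = c • F1 (Function.update Y j u) + F1 (Function.update Y j v) := by
      intro Y j c u v
      simpa [hF1] using congrArg Prod.fst (hlin2 E Y j c u v)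
    have hm2 : ∀ (Y : Fin (q+1) → ℝ × ℝ) (j : Fin (q+1)) (c : ℝ) (u v : ℝ × ℝ),
        F2 (Function.update Y j (c • u + v))
          = c • F2 (Function.update Y j u) + F2 (Function.update Y j v) := by
      intro Y j c u v
      simpa [hF2] using congrArg Prod.snd (hlin2 E Y j c u v)
    have hk1 : ∀ (Y : Fin (q+1) → ℝ × ℝ) (j : Fin (q+1)) (w : ℝ × ℝ),
        F1 (Function.update Y j w) = w.2 • F1 (Function.update Y j ((0:ℝ),(1:ℝ))) := by
      intro Y j w
      have hd := upd_decomp hm1 Y j w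
      have hz : F1 (Function.update Y j ((1:ℝ),(0:ℝ))) = 0 := by
        obtain ⟨T, hT, hTeq⟩ := hcon E Y j
        obtain ⟨A₁, A₂, hA⟩ := hT
        have h := hTeq ((1:ℝ),(0:ℝ))
        rw [hA 1 0] at h
        simp [hF1, h]
      rw [hd, hz, smul_zero, zero_add]
    have hk2 : ∀ (Y : Fin (q+1) → ℝ × ℝ) (j : Fin (q+1)) (w : ℝ × ℝ),
        F2 (Function.update Y j w) = w.1 • F2 (Function.update Y j ((1:ℝ),(0:ℝ))) := by
      intro Y j w
      have hd := upd_decomp hm2 Y j w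
      have hz : F2 (Function.update Y j ((0:ℝ),(1:ℝ))) = 0 := by
        obtain ⟨T, hT, hTeq⟩ := hcon E Y j
        obtain ⟨A₁, A₂, hA⟩ := hT
        have h := hTeq ((0:ℝ),(1:ℝ))
        rw [hA 0 1] at h
        simp [hF2, h]
      rw [hd, hz, smul_zero, add_zero]
    set X2 : V := F1 (fun _ => ((0:ℝ),(1:ℝ))) with hX2
    set X1 : V := F2 (fun _ => ((1:ℝ),(0:ℝ))) with hX1
    have hEY : ∀ Y : Fin (q+1) → ℝ × ℝ,
        φ E Y = ((∏ i, (Y i).2) • X2, (∏ i, (Y i).1) • X1) := by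
      intro Y
      have h1 := prod_structure ((0:ℝ),(1:ℝ)) Prod.snd hk1 Y
      have h2 := prod_structure ((1:ℝ),(0:ℝ)) Prod.fst hk2 Y
      exact Prod.ext_iff.mpr ⟨h1, h2⟩
    have hdet : ∀ (X : Fin 2 → ℝ × ℝ) (Y : Fin (q+1) → ℝ × ℝ),
        φ X Y = ((X 0).1 * (X 1).2 - (X 0).2 * (X 1).1) • φ E Y := by
      intro X Y
      exact det_expand (fun X => φ X Y) (fun X i c u v => hlin1 X i c u v Y)
        (fun X i j hij hx => halt X Y i j hij hx) X
    refine ⟨fun X Y => (((X 0).1 * ∏ i, (Y i).2) • X2, (-((X 0).2 * ∏ i, (Y i).1)) • X1),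
      ⟨?_, ?_, ?_, ?_, ?_⟩, ?_⟩
    · -- exterior multilinearity (Fin 1)
      intro X i c u v Y
      have hi : i = 0 := Subsingleton.elim i 0
      subst hi
      simp only [Function.update_self, Prod.fst_add, Prod.snd_add, Prod.smul_fst,
        Prod.smul_snd, smul_eq_mul, Prod.smul_mk, Prod.mk_add_mk, Prod.mk.injEq]
      constructor <;> module
    · -- symmetric-slot multilinearity
      intro X Y j c u v
      simp only [prod_update_comp _ _ _ Prod.snd, prod_update_comp _ _ _ Prod.fst,
        Prod.fst_add, Prod.snd_add, Prod.smul_fst, Prod.smul_snd, smul_eq_mul,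
        Prod.smul_mk, Prod.mk_add_mk, Prod.mk.injEq]
      constructor <;> module
    · -- alternating (vacuous for p = 1)
      intro X Y i j hij _
      exact absurd (Subsingleton.elim i j) hij
    · -- symmetric under permutations
      intro X Y σ
      have h2 := Equiv.prod_comp σ (fun i => (Y i).2)
      have h1 := Equiv.prod_comp σ (fun i => (Y i).1)
      simp only [Function.comp_apply]
      rw [h1, h2]
    · -- contraction lies in the tableau
      intro X w j
      refine ⟨wmap ((-((X 0).2 * ∏ i ∈ Finset.univ \ {j}, (w i).1)) • X1)
          (((X 0).1 * ∏ i ∈ Finset.univ \ {j}, (w i).2) • X2), wmap_mem _ _, fun Z => ?_⟩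
      simp only [prod_update_comp _ _ _ Prod.snd, prod_update_comp _ _ _ Prod.fst,
        wmap_apply, Prod.mk.injEq]
      constructor <;> module
    · -- δψ = φ
      funext X Y
      have hs0 : (0 : Fin 2).succAbove 0 = 1 := by decide
      have hs1 : (1 : Fin 2).succAbove 0 = 0 := by decide
      rw [hdet X Y, hEY Y]
      simp only [spencerD, Nat.reduceAdd, Fin.sum_univ_two, hs0, hs1, Fin.val_zero, Fin.val_one,
        Fin.prod_univ_succ, Fin.cons_zero, Fin.cons_succ, pow_one, pow_succ, pow_zero,
        one_mul, neg_mul, neg_smul, one_smul, Prod.smul_mk, smul_eq_mul, Prod.mk_add_mk,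
        Prod.neg_mk, Prod.mk.injEq, neg_neg, mul_one, neg_one_mul]
      constructor <;> module
end
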